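/- Long exact sequence comparison: given two long exact sequences of systems of abelian groups … → C_k → D_k → Q_k →∂ C_{k−1} → … such that each system Q_k has the property that every element of Q_{k,t} maps to 0 in Q_{k,t+2r} under the structure map, the maps C_k → D_k are 2r-isomorphisms for all k. -/

import Mathlib

/-!
Both halves are one-step diagram chases through the `Q`'s, whose structure maps over `2r` vanish.
If `φ a = 0` then `a = ∂ q` with `q ∈ Q_{k+1}`, so by naturality of `∂` the shift of `a` is `∂` of
the shift of `q`, which is `0`. For `b ∈ D_k`, naturality of `p` shows that `p` sends the shift of
`b` to the shift of `p b`, which is `0`; so the shift of `b` lies in the image of `φ`.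
-/

open scoped NNReal

/-- A system of abelian groups: a functor `[0,∞) → Ab`. -/
structure SysAb where
  obj : ℝ≥0 → AddCommGrpCat
  map : ∀ {s t : ℝ≥0}, s ≤ t → (obj s ⟶ obj t)
  map_id : ∀ s : ℝ≥0, map (le_refl s) = CategoryTheory.CategoryStruct.id (obj s)
  map_comp : ∀ {s t u : ℝ≥0} (h₁ : s ≤ t) (h₂ : t ≤ u),
    CategoryTheory.CategoryStruct.comp (map h₁) (map h₂) = map (h₁.trans h₂)

/-- A map of systems of abelian groups: a natural transformation. -/
structure SysAb.Hom (X Y : SysAb) where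
  app : ∀ s : ℝ≥0, (X.obj s ⟶ Y.obj s)
  naturality : ∀ {s t : ℝ≥0} (h : s ≤ t) (x : X.obj s),
    app t (X.map h x) = Y.map h (app s x)

/-- `f` is an `r`-monomorphism: `f(a) = 0` in `B_t` implies `σ(a) = 0` in `A_{t+r}`. -/
def SysAb.Hom.IsMono {X Y : SysAb} (r : ℝ≥0) (f : X.Hom Y) : Prop :=
  ∀ (s : ℝ≥0) (a : X.obj s), f.app s a = 0 →
    X.map (le_self_add : s ≤ s + r) a = 0

/-- `f` is an `r`-epimorphism: for `b ∈ B_t` there is `a ∈ A_{t+r}` with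
`σ(b) = f(a)` in `B_{t+r}`. -/
def SysAb.Hom.IsEpi {X Y : SysAb} (r : ℝ≥0) (f : X.Hom Y) : Prop :=
  ∀ (s : ℝ≥0) (b : Y.obj s), ∃ a : X.obj (s + r),
    f.app (s + r) a = Y.map (le_self_add : s ≤ s + r) b

/-- `f` is an `r`-isomorphism if it is both an `r`-monomorphism and an `r`-epimorphism. -/
def SysAb.Hom.IsIso {X Y : SysAb} (r : ℝ≥0) (f : X.Hom Y) : Prop :=
  f.IsMono r ∧ f.IsEpi r

namespace SysAb.Hom

variable {X Y Z : SysAb} {r : ℝ≥0}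

theorem isMono_of_ker_le_range (f : X.Hom Y) (g : Z.Hom X)
    (hker : ∀ (t : ℝ≥0) (x : X.obj t), f.app t x = 0 → ∃ z : Z.obj t, g.app t z = x)
    (hZ : ∀ (t : ℝ≥0) (z : Z.obj t), Z.map (le_self_add : t ≤ t + r) z = 0) :
    f.IsMono r := by
  intro t x hx
  obtain ⟨z, rfl⟩ := hker t x hx
  rw [← g.naturality, hZ, map_zero]

theorem isEpi_of_ker_le_range (f : X.Hom Y) (g : Y.Hom Z)
    (hker : ∀ (t : ℝ≥0) (y : Y.obj t), g.app t y = 0 → ∃ x : X.obj t, f.app t x = y)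
    (hZ : ∀ (t : ℝ≥0) (z : Z.obj t), Z.map (le_self_add : t ≤ t + r) z = 0) :
    f.IsEpi r := by
  intro t y
  apply hker
  rw [g.naturality, hZ]

end SysAb.Hom

theorem stmt17_general (C D Q : ℤ → SysAb)
    (φ : ∀ k : ℤ, (C k).Hom (D k)) (p : ∀ k : ℤ, (D k).Hom (Q k))
    (d : ∀ k : ℤ, (Q k).Hom (C (k - 1)))
    (exactD : ∀ (k : ℤ) (t : ℝ≥0) (b : (D k).obj t),
      (p k).app t b = 0 ↔ ∃ a : (C k).obj t, (φ k).app t a = b)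
    (exactC : ∀ (k : ℤ) (t : ℝ≥0) (a : (C (k - 1)).obj t),
      (φ (k - 1)).app t a = 0 ↔ ∃ q : (Q k).obj t, (d k).app t q = a)
    (r : ℝ≥0)
    (hQ : ∀ (k : ℤ) (t : ℝ≥0) (q : (Q k).obj t),
      (Q k).map (le_self_add : t ≤ t + 2 * r) q = 0) :
    ∀ k : ℤ, (φ k).IsIso (2 * r) := by
  intro k
  constructor
  · obtain ⟨j, rfl⟩ : ∃ j, k = j - 1 := ⟨k + 1, by ring⟩
    exact (φ (j - 1)).isMono_of_ker_le_range (d j) (fun t x => (exactC j t x).mp) (hQ j)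
  · exact (φ k).isEpi_of_ker_le_range (p k) (fun t y => (exactD k t y).mp) (hQ k)

/-- Long exact sequence comparison: given a long exact sequence of systems of abelian
groups `… → C_k → D_k → Q_k →∂ C_{k-1} → …` (exact at each parameter `t`, natural in
`t`) such that every element of `Q_{k,t}` maps to `0` in `Q_{k,t+2r}` under the structure
map, the maps `C_k → D_k` are `2r`-isomorphisms for all `k`. -/
theorem stmt17 (C D Q : ℤ → SysAb)
    (φ : ∀ k : ℤ, (C k).Hom (D k)) (p : ∀ k : ℤ, (D k).Hom (Q k))
    (d : ∀ k : ℤ, (Q k).Hom (C (k - 1)))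
    (exactD : ∀ (k : ℤ) (t : ℝ≥0) (b : (D k).obj t),
      (p k).app t b = 0 ↔ ∃ a : (C k).obj t, (φ k).app t a = b)
    (exactQ : ∀ (k : ℤ) (t : ℝ≥0) (q : (Q k).obj t),
      (d k).app t q = 0 ↔ ∃ b : (D k).obj t, (p k).app t b = q)
    (exactC : ∀ (k : ℤ) (t : ℝ≥0) (a : (C (k - 1)).obj t),
      (φ (k - 1)).app t a = 0 ↔ ∃ q : (Q k).obj t, (d k).app t q = a)
    (r : ℝ≥0)
    (hQ : ∀ (k : ℤ) (t : ℝ≥0) (q : (Q k).obj t),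
      (Q k).map (le_self_add : t ≤ t + 2 * r) q = 0) :
    ∀ k : ℤ, (φ k).IsIso (2 * r) :=
  stmt17_general C D Q φ p d exactD exactC r hQ
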